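/- arXiv:2411.15019 — 3 statements merged into one kernel-verified Lean document; each statement's English description precedes it below -/
import Mathlib

section
/- Let η and μ be two finite Borel measures on ℝ^d, with μ singular with respect to Lebesgue measure 𝓛^d. Then for 𝓛^d-almost every vector v ∈ ℝ^d, the measures η and (τ_v)_♯ μ are mutually singular, where τ_v(x) = x + v. -/
/-!
If `μ` is carried by a set `S` with `ν S = 0`, then `μ` translated by `v` is carried by `S + v`,
so it suffices that `η (S + v) = 0` for `ν`-a.e. `v`. By Tonelli, `∫ η (S + v) dν(v)` is the
`ν × η`-measure of `{(v, x) | x - v ∈ S}`, whose sections `{v | x - v ∈ S}` are preimages of `S`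
under `v ↦ x - v`, hence `ν`-null since this map is quasi-measure-preserving for left-invariant `ν`.
-/

open MeasureTheory Measure

section

variable {G : Type*} [MeasurableSpace G] [AddGroup G] [MeasurableAdd₂ G] [MeasurableNeg G]
  {ν : Measure G} [SFinite ν] [IsAddLeftInvariant ν]

lemma ae_measure_preimage_sub_const_eq_zero (η : Measure G) [SFinite η] {S : Set G}
    (hS : MeasurableSet S) (hνS : ν S = 0) : ∀ᵐ v ∂ν, η ((· - v) ⁻¹' S) = 0 := by
  set A : Set (G × G) := {p | p.2 - p.1 ∈ S}
  have hA : MeasurableSet A := hS.preimage (by fun_prop)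
  have hsection_null (x : G) : ν ((fun v ↦ (v, x)) ⁻¹' A) = 0 :=
    (quasiMeasurePreserving_sub_left ν x).preimage_null hνS
  have hprod : ν.prod η A = 0 := by
    simp [Measure.prod_apply_symm hA, hsection_null]
  exact (measure_prod_null hA).1 hprod

theorem MeasureTheory.Measure.MutuallySingular.ae_mutuallySingular_map_add_const
    (η : Measure G) [SFinite η] {μ : Measure G} (h : μ ⟂ₘ ν) :
    ∀ᵐ v ∂ν, η ⟂ₘ μ.map (· + v) := by
  obtain ⟨s, hs, hμs, hνs⟩ := h
  filter_upwards [ae_measure_preimage_sub_const_eq_zero η hs.compl hνs] with v hv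
  refine ⟨(· - v) ⁻¹' sᶜ, hs.compl.preimage (measurable_sub_const v), hv, ?_⟩
  rw [map_apply (measurable_add_const v) (hs.compl.preimage (measurable_sub_const v)).compl]
  simpa [Set.preimage_preimage] using hμs

end

theorem stmt_1_general {d : ℕ} (η μ : Measure (EuclideanSpace ℝ (Fin d)))
    [IsFiniteMeasure η]
    (hsing : μ ⟂ₘ (volume : Measure (EuclideanSpace ℝ (Fin d)))) :
    ∀ᵐ v ∂(volume : Measure (EuclideanSpace ℝ (Fin d))),
      η ⟂ₘ Measure.map (fun x => x + v) μ :=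
  hsing.ae_mutuallySingular_map_add_const η

theorem stmt_1 {d : ℕ} (η μ : Measure (EuclideanSpace ℝ (Fin d)))
    [IsFiniteMeasure η] [IsFiniteMeasure μ]
    (hsing : μ ⟂ₘ (volume : Measure (EuclideanSpace ℝ (Fin d)))) :
    ∀ᵐ v ∂(volume : Measure (EuclideanSpace ℝ (Fin d))),
      η ⟂ₘ Measure.map (fun x => x + v) μ :=
  stmt_1_general η μ hsing
end

section
/- Let f : ℝ^d → ℝ be a bounded Lipschitz function and let (π_n) be a sequence of L-Lipschitz functions ℝ^d → ℝ converging pointwise to a function π. Let γ : [0,1] → ℝ^d be a Lipschitz curve. Then ∫_0^1 f(γ(t)) (π_n ∘ γ)'(t) dt → ∫_0^1 f(γ(t)) (π ∘ γ)'(t) dt. -/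
/-!
Write `g = f ∘ γ` and `hₙ = πₙ ∘ γ`, all Lipschitz, hence absolutely continuous, on `[0, 1]`.
Integration by parts turns `∫ g hₙ'` into `g(1) hₙ(1) - g(0) hₙ(0) - ∫ g' hₙ`. The boundary terms
converge pointwise, and so does `∫ g' hₙ` by dominated convergence: `g'` is integrable, and the
`hₙ` are uniformly bounded on `[0, 1]` because they are equi-Lipschitz and converge at a point.
-/

open Filter Set MeasureTheory intervalIntegral
open scoped NNReal Topology

theorem LipschitzOnWith.of_tendsto {ι α β : Type*} [PseudoMetricSpace α] [PseudoMetricSpace β]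
    {l : Filter ι} [l.NeBot] {K : ℝ≥0} {s : Set α} {u : ι → α → β} {v : α → β}
    (hu : ∀ i, LipschitzOnWith K (u i) s) (hlim : ∀ x ∈ s, Tendsto (fun i => u i x) l (𝓝 (v x))) :
    LipschitzOnWith K v s :=
  LipschitzOnWith.of_dist_le_mul fun x hx y hy =>
    le_of_tendsto ((hlim x hx).dist (hlim y hy))
      (Eventually.of_forall fun i => (hu i).dist_le_mul x hx y hy)

theorem LipschitzOnWith.exists_forall_norm_le_of_tendsto {α E : Type*} [PseudoMetricSpace α]
    [SeminormedAddCommGroup E] {K : ℝ≥0} {s : Set α} (hs : Bornology.IsBounded s)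
    {u : ℕ → α → E} (hu : ∀ n, LipschitzOnWith K (u n) s) {x₀ : α} (hx₀ : x₀ ∈ s) {c : E}
    (hc : Tendsto (fun n => u n x₀) atTop (𝓝 c)) :
    ∃ B, ∀ n, ∀ x ∈ s, ‖u n x‖ ≤ B := by
  obtain ⟨B₀, hB₀⟩ := (Metric.isBounded_range_of_tendsto _ hc).exists_norm_le
  refine ⟨B₀ + K * Metric.diam s, fun n x hx => ?_⟩
  calc ‖u n x‖ ≤ ‖u n x₀‖ + dist (u n x) (u n x₀) := by
        rw [dist_eq_norm]; exact norm_le_norm_add_norm_sub' _ _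
    _ ≤ B₀ + K * Metric.diam s := by
      gcongr
      · exact hB₀ _ (mem_range_self n)
      · exact ((hu n).dist_le_mul x hx x₀ hx₀).trans
          (by gcongr; exact Metric.dist_le_diam_of_mem hs hx hx₀)

theorem tendsto_integral_mul_deriv_of_lipschitzOnWith {g : ℝ → ℝ} {a b : ℝ}
    (hg : AbsolutelyContinuousOnInterval g a b) {K : ℝ≥0} {u : ℕ → ℝ → ℝ} {v : ℝ → ℝ}
    (hu : ∀ n, LipschitzOnWith K (u n) (uIcc a b))
    (hlim : ∀ x ∈ uIcc a b, Tendsto (fun n => u n x) atTop (𝓝 (v x))) :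
    Tendsto (fun n => ∫ x in a..b, g x * deriv (u n) x) atTop
      (𝓝 (∫ x in a..b, g x * deriv v x)) := by
  have hv : LipschitzOnWith K v (uIcc a b) := .of_tendsto hu hlim
  obtain ⟨B, hB⟩ := LipschitzOnWith.exists_forall_norm_le_of_tendsto isCompact_uIcc.isBounded hu
    left_mem_uIcc (hlim a left_mem_uIcc)
  have hparts : Tendsto (fun n => ∫ x in a..b, deriv g x * u n x) atTop
      (𝓝 (∫ x in a..b, deriv g x * v x)) := by
    refine tendsto_integral_filter_of_dominated_convergence (fun x => ‖deriv g x‖ * B)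
      (Eventually.of_forall fun n => ?_) (Eventually.of_forall fun n => ?_)
      (hg.intervalIntegrable_deriv.norm.mul_const B) (ae_of_all _ fun x hx => ?_)
    · exact (hg.intervalIntegrable_deriv.mul_continuousOn
        (hu n).continuousOn).def'.aestronglyMeasurable
    · refine ae_of_all _ fun x hx => ?_
      rw [norm_mul]
      gcongr
      exact hB n x (uIoc_subset_uIcc hx)
    · exact tendsto_const_nhds.mul (hlim x (uIoc_subset_uIcc hx))
  simp_rw [hg.integral_mul_deriv_eq_deriv_mul (hu _).absolutelyContinuousOnInterval,
    hg.integral_mul_deriv_eq_deriv_mul hv.absolutelyContinuousOnInterval]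
  exact ((tendsto_const_nhds.mul (hlim b right_mem_uIcc)).sub
    (tendsto_const_nhds.mul (hlim a left_mem_uIcc))).sub hparts

theorem stmt_8_general {d : ℕ} (f : EuclideanSpace ℝ (Fin d) → ℝ) (Kf : NNReal)
    (hflip : LipschitzWith Kf f)
    (L : NNReal) (π : ℕ → EuclideanSpace ℝ (Fin d) → ℝ)
    (hπ : ∀ n, LipschitzWith L (π n))
    (πlim : EuclideanSpace ℝ (Fin d) → ℝ)
    (hconv : ∀ x, Tendsto (fun n => π n x) atTop (nhds (πlim x)))
    (γ : ℝ → EuclideanSpace ℝ (Fin d)) (M : NNReal)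
    (hγ : LipschitzOnWith M γ (Set.Icc 0 1)) :
    Tendsto (fun n => ∫ t in (0:ℝ)..1, f (γ t) * deriv (fun s => π n (γ s)) t)
      atTop (nhds (∫ t in (0:ℝ)..1, f (γ t) * deriv (fun s => πlim (γ s)) t)) := by
  rw [← uIcc_of_le zero_le_one] at hγ
  exact tendsto_integral_mul_deriv_of_lipschitzOnWith
    (hflip.comp_lipschitzOnWith hγ).absolutelyContinuousOnInterval
    (fun n => (hπ n).comp_lipschitzOnWith hγ) fun t _ => hconv (γ t)

theorem stmt_8 {d : ℕ} (f : EuclideanSpace ℝ (Fin d) → ℝ) (Kf : NNReal)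
    (hflip : LipschitzWith Kf f) (C : ℝ) (hfb : ∀ x, |f x| ≤ C)
    (L : NNReal) (π : ℕ → EuclideanSpace ℝ (Fin d) → ℝ)
    (hπ : ∀ n, LipschitzWith L (π n))
    (πlim : EuclideanSpace ℝ (Fin d) → ℝ)
    (hconv : ∀ x, Tendsto (fun n => π n x) atTop (nhds (πlim x)))
    (γ : ℝ → EuclideanSpace ℝ (Fin d)) (M : NNReal)
    (hγ : LipschitzOnWith M γ (Set.Icc 0 1)) :
    Tendsto (fun n => ∫ t in (0:ℝ)..1, f (γ t) * deriv (fun s => π n (γ s)) t)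
      atTop (nhds (∫ t in (0:ℝ)..1, f (γ t) * deriv (fun s => πlim (γ s)) t)) :=
  stmt_8_general f Kf hflip L π hπ πlim hconv γ M hγ
end

section
/- Let μ be a nonzero finite Borel measure on ℝ^d, singular with respect to Lebesgue measure. Then there exist arbitrarily small vectors v ∈ ℝ^d, v ≠ 0, such that ‖(τ_v)_♯ μ − μ‖_{TV} = 2 μ(ℝ^d). -/
/-! Let `μ` be carried by a Lebesgue-null set `N`. By Tonelli,
`∫ μ (N - v) dv = ∫ vol (N - x) dμ(x) = 0`, so for a.e. `v` the translate `τ_v μ` gives no mass to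
`N` and is therefore singular to `μ`. Then the Jordan decomposition of `τ_v μ - μ` is `(τ_v μ, μ)`
and its total variation is `μ(ℝ^d) + μ(ℝ^d)`. A set of full Lebesgue measure meets every punctured
ball, which yields arbitrarily small such `v`. -/

open MeasureTheory Metric

namespace MeasureTheory

theorem Measure.MutuallySingular.nontrivial {α : Type*} [MeasurableSpace α] {μ ν : Measure α}
    (h : μ ⟂ₘ ν) (hμ : μ ≠ 0) (hν : ν ≠ 0) : Nontrivial α := by
  by_contra hα
  have : Subsingleton α := not_nontrivial_iff_subsingleton.mp hα
  obtain ⟨s, -, hμs, hνs⟩ := h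
  rcases s.eq_empty_or_nonempty with rfl | hs
  · exact hν (Measure.measure_univ_eq_zero.mp (by simpa using hνs))
  · exact hμ (Measure.measure_univ_eq_zero.mp (by rwa [hs.eq_univ] at hμs))

theorem SignedMeasure.totalVariation_toSignedMeasure_sub_of_mutuallySingular {α : Type*}
    [MeasurableSpace α] {μ ν : Measure α} [IsFiniteMeasure μ] [IsFiniteMeasure ν] (h : μ ⟂ₘ ν) :
    (μ.toSignedMeasure - ν.toSignedMeasure).totalVariation = μ + ν := by
  let j : JordanDecomposition α := ⟨μ, ν, h⟩
  change j.toSignedMeasure.totalVariation = μ + ν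
  rw [SignedMeasure.totalVariation, JordanDecomposition.toJordanDecomposition_toSignedMeasure]

section Translation

variable {G : Type*} [MeasurableSpace G] [AddGroup G] [MeasurableAdd₂ G]
  {μ ν : Measure G} [SFinite μ] [SFinite ν] [ν.IsAddLeftInvariant]

theorem Measure.ae_measure_preimage_add_right_eq_zero {s : Set G} (hs : MeasurableSet s)
    (hνs : ν s = 0) : ∀ᵐ v ∂ν, μ ((· + v) ⁻¹' s) = 0 := by
  have hT : MeasurableSet {p : G × G | p.2 + p.1 ∈ s} := (measurable_snd.add measurable_fst) hs
  have hint : ∫⁻ v, μ ((· + v) ⁻¹' s) ∂ν = 0 := calc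
    ∫⁻ v, μ ((· + v) ⁻¹' s) ∂ν = (ν.prod μ) {p | p.2 + p.1 ∈ s} := (Measure.prod_apply hT).symm
    _ = ∫⁻ x, ν ((x + ·) ⁻¹' s) ∂μ := Measure.prod_apply_symm hT
    _ = 0 := by simp [measure_preimage_add, hνs]
  exact (lintegral_eq_zero_iff (measurable_measure_prodMk_left hT)).mp hint

theorem Measure.MutuallySingular.ae_map_add_right (h : μ ⟂ₘ ν) :
    ∀ᵐ v ∂ν, μ.map (· + v) ⟂ₘ μ := by
  obtain ⟨s, hs, hμs, hνs⟩ := h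
  filter_upwards [Measure.ae_measure_preimage_add_right_eq_zero (μ := μ) hs.compl hνs] with v hv
  refine ⟨sᶜ, hs.compl, ?_, by rwa [compl_compl]⟩
  rwa [Measure.map_apply (measurable_add_const v) hs.compl]

end Translation

theorem exists_ne_zero_norm_lt_of_ae {E : Type*} [NormedAddCommGroup E] [MeasurableSpace E]
    [OpensMeasurableSpace E] {ν : Measure E} [ν.IsOpenPosMeasure] [NullSingletonClass ν]
    {P : E → Prop} (h : ∀ᵐ v ∂ν, P v) {ε : ℝ} (hε : 0 < ε) : ∃ v, v ≠ 0 ∧ ‖v‖ < ε ∧ P v := by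
  have : (ae (ν.restrict (ball 0 ε))).NeBot := ae_restrict_neBot.mpr (measure_ball_pos ν 0 hε).ne'
  have hball : ∀ᵐ v ∂ν.restrict (ball 0 ε), v ∈ ball 0 ε ∧ v ≠ 0 ∧ P v :=
    (ae_restrict_mem measurableSet_ball).and (ae_restrict_of_ae ((Measure.ae_ne ν 0).and h))
  obtain ⟨v, hvε, hv0, hv⟩ := hball.exists
  exact ⟨v, hv0, mem_ball_zero_iff.mp hvε, hv⟩

end MeasureTheory

open MeasureTheory

theorem stmt_12 {d : ℕ} (μ : Measure (EuclideanSpace ℝ (Fin d))) [IsFiniteMeasure μ]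
    (hμ : μ ≠ 0) (hsing : μ ⟂ₘ (volume : Measure (EuclideanSpace ℝ (Fin d)))) :
    ∀ ε > 0, ∃ v : EuclideanSpace ℝ (Fin d), v ≠ 0 ∧ ‖v‖ < ε ∧
      ((Measure.map (fun x => x + v) μ).toSignedMeasure - μ.toSignedMeasure).totalVariation
        Set.univ = 2 * μ Set.univ := by
  intro ε hε
  have := hsing.nontrivial hμ (NeZero.ne _)
  obtain ⟨v, hv0, hvε, hv⟩ := exists_ne_zero_norm_lt_of_ae hsing.ae_map_add_right hε
  refine ⟨v, hv0, hvε, ?_⟩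
  rw [SignedMeasure.totalVariation_toSignedMeasure_sub_of_mutuallySingular hv, Measure.add_apply,
    Measure.map_apply (measurable_add_const v) MeasurableSet.univ, Set.preimage_univ, two_mul]
end
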